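/- arXiv:1804.02881 — 10 statements merged into one kernel-verified Lean document; each statement's English description precedes it below -/
import Mathlib

section
/- Let M be a maximal element of 𝔐 containing 0, and let i ∈ {0,…,N−1}. Then M contains an element that is congruent to i modulo N. -/
/-- The set `𝒮₊ = {N + c₁a₁ + ⋯ + c_d a_d : cᵢ ∈ ℕ}` viewed inside `ℤ`. -/
def Splus (d : ℕ) (a : Fin d → ℕ) (N : ℕ) : Set ℤ :=
  { x : ℤ | ∃ c : Fin d → ℕ, x = (N : ℤ) + ∑ i, (c i : ℤ) * (a i : ℤ) }

/-- The set `𝒮 = 𝒮₊ ∪ (−𝒮₊)`. -/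
def Sfull (d : ℕ) (a : Fin d → ℕ) (N : ℕ) : Set ℤ :=
  Splus d a N ∪ (-(Splus d a N))

/-- The collection `𝔐` of subsets of `ℤ` all of whose pairwise differences avoid `𝒮`. -/
def Cliques (d : ℕ) (a : Fin d → ℕ) (N : ℕ) : Set (Set ℤ) :=
  { M : Set ℤ | ∀ m ∈ M, ∀ m' ∈ M, m - m' ∉ Sfull d a N }

/-- `M` is a maximal element of `𝔐`. -/
def IsMaximalClique (d : ℕ) (a : Fin d → ℕ) (N : ℕ) (M : Set ℤ) : Prop :=
  M ∈ Cliques d a N ∧ ∀ M' ∈ Cliques d a N, M ⊆ M' → M' = M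

/-- Bezout over a finite family. -/
lemma bezout_fin {d : ℕ} (a : Fin d → ℕ) :
    ∃ z : Fin d → ℤ, ∑ j, z j * (a j : ℤ) = ((Finset.univ.gcd a : ℕ) : ℤ) := by
  classical
  suffices h : ∀ s : Finset (Fin d), ∃ z : Fin d → ℤ,
      ∑ j ∈ s, z j * (a j : ℤ) = ((s.gcd a : ℕ) : ℤ) from h Finset.univ
  intro s
  induction s using Finset.induction_on with
  | empty => exact ⟨0, by simp⟩
  | @insert i s hi ih =>
    obtain ⟨z, hz⟩ := ih
    refine ⟨fun j => if j = i then Nat.gcdA (a i) (s.gcd a)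
      else Nat.gcdB (a i) (s.gcd a) * z j, ?_⟩
    rw [Finset.sum_insert hi, Finset.gcd_insert]
    simp only [eq_self_iff_true, if_true]
    have h1 : ∀ j ∈ s, (if j = i then Nat.gcdA (a i) (s.gcd a)
        else Nat.gcdB (a i) (s.gcd a) * z j) * (a j : ℤ)
        = Nat.gcdB (a i) (s.gcd a) * (z j * (a j : ℤ)) := by
      intro j hj
      rw [if_neg (by rintro rfl; exact hi hj)]; ring
    rw [Finset.sum_congr rfl h1, ← Finset.mul_sum, hz]
    have hg := Nat.gcd_eq_gcd_ab (a i) (s.gcd a)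
    have : GCDMonoid.gcd (a i) (s.gcd a) = Nat.gcd (a i) (s.gcd a) := rfl
    rw [this]
    linarith [hg]

/-- Every residue class mod `q` is hit by a nonnegative combination. -/
lemma residue_hit {d : ℕ} (a : Fin d → ℕ) (hgcd : Finset.univ.gcd a = 1)
    (q : ℕ) (hq : 0 < q) (r : ℤ) :
    ∃ c : Fin d → ℕ, (q : ℤ) ∣ (∑ j, (c j : ℤ) * (a j : ℤ)) - r := by
  obtain ⟨z, hz⟩ := bezout_fin a
  rw [hgcd] at hz
  push_cast at hz
  set c : Fin d → ℕ := fun j => ((z j * r) % q).toNat with hc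
  have hcast : ∀ j : Fin d, ((c j : ℕ) : ℤ) = (z j * r) % q := fun j =>
    Int.toNat_of_nonneg (Int.emod_nonneg _ (by exact_mod_cast hq.ne'))
  have hzr : ∑ j, (z j * r) * (a j : ℤ) = r := by
    calc ∑ j, (z j * r) * (a j : ℤ) = r * ∑ j, z j * (a j : ℤ) := by
          rw [Finset.mul_sum]; exact Finset.sum_congr rfl (fun j _ => by ring)
      _ = r := by rw [hz]; ring
  have key : (∑ j, (c j : ℤ) * (a j : ℤ)) - r
      = ∑ j, ((c j : ℤ) - z j * r) * (a j : ℤ) := by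
    simp only [sub_mul, Finset.sum_sub_distrib, hzr]
  refine ⟨c, ?_⟩
  rw [key]
  refine Finset.dvd_sum (fun j _ => Dvd.dvd.mul_right ?_ _)
  rw [hcast j, Int.emod_def]
  exact ⟨-(z j * r / q), by ring⟩

/-- All sufficiently large integers are nonnegative combinations. -/
lemma frobenius_bound {d : ℕ} (a : Fin d → ℕ) (ha : ∀ i, 0 < a i)
    (hgcd : Finset.univ.gcd a = 1) (hd : 0 < d) :
    ∃ F : ℤ, ∀ n : ℤ, F ≤ n → ∃ c : Fin d → ℕ, n = ∑ j, (c j : ℤ) * (a j : ℤ) := by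
  classical
  set j₀ : Fin d := ⟨0, hd⟩
  set q : ℕ := a j₀ with hqdef
  have hq : 0 < q := ha j₀
  have hch : ∀ r : ℕ, ∃ c : Fin d → ℕ, (q : ℤ) ∣ (∑ j, (c j : ℤ) * (a j : ℤ)) - r :=
    fun r => residue_hit a hgcd q hq r
  choose g hg using hch
  set s : ℕ → ℤ := fun r => ∑ j, (g r j : ℤ) * (a j : ℤ) with hs
  have hs0 : ∀ r, 0 ≤ s r := by
    intro r
    exact Finset.sum_nonneg (fun j _ => mul_nonneg (Int.natCast_nonneg _) (Int.natCast_nonneg _))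
  refine ⟨1 + ∑ r ∈ Finset.range q, s r, ?_⟩
  intro n hn
  set r : ℕ := (n % (q : ℤ)).toNat with hr
  have hrq : r < q := by
    have h1 : n % (q : ℤ) < q := Int.emod_lt_of_pos _ (by exact_mod_cast hq)
    have h2 : 0 ≤ n % (q : ℤ) := Int.emod_nonneg _ (by exact_mod_cast hq.ne')
    omega
  have hrcast : ((r : ℕ) : ℤ) = n % (q : ℤ) := by
    rw [hr]
    exact Int.toNat_of_nonneg (Int.emod_nonneg _ (by exact_mod_cast hq.ne'))
  have hsle : s r ≤ ∑ r' ∈ Finset.range q, s r' :=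
    Finset.single_le_sum (fun r' _ => hs0 r') (Finset.mem_range.mpr hrq)
  have hns : s r < n := by linarith
  have hdvd : (q : ℤ) ∣ n - s r := by
    have h1 : (q : ℤ) ∣ s r - r := hg r
    have h2 : (q : ℤ) ∣ n - (r : ℤ) := by
      rw [hrcast, Int.emod_def]
      exact ⟨n / q, by ring⟩
    have := h2.sub h1
    simpa using this
  obtain ⟨t, ht⟩ := hdvd
  have ht0 : 0 ≤ t := by nlinarith [hq, hns]
  refine ⟨fun j => g r j + (if j = j₀ then t.toNat else 0), ?_⟩
  have : ∑ j, (((g r j + (if j = j₀ then t.toNat else 0)) : ℕ) : ℤ) * (a j : ℤ)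
      = s r + (t.toNat : ℤ) * (a j₀ : ℤ) := by
    push_cast
    rw [Finset.sum_congr rfl (fun j _ => by rw [add_mul]), Finset.sum_add_distrib]
    congr 1
    simp [ite_mul, Finset.sum_ite_eq']
  rw [this, Int.toNat_of_nonneg ht0]
  have hq' : ((a j₀ : ℕ) : ℤ) = (q : ℤ) := by exact_mod_cast hqdef.symm
  rw [hq']
  linarith [ht]

theorem stmt_1 (d : ℕ) (a : Fin d → ℕ) (ha : ∀ i, 0 < a i)
    (hgcd : Finset.univ.gcd a = 1) (N : ℕ)
    (M : Set ℤ) (hM : IsMaximalClique d a N M) (h0 : (0 : ℤ) ∈ M)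
    (i : ℕ) (hi : i < N) :
    ∃ m ∈ M, m ≡ (i : ℤ) [ZMOD (N : ℤ)] := by
  classical
  have hN : 0 < N := lt_of_le_of_lt (Nat.zero_le i) hi
  have hd : 0 < d := by
    rcases Nat.eq_zero_or_pos d with h | h
    · subst h
      simp [Finset.univ_eq_empty] at hgcd
    · exact h
  obtain ⟨F, hF⟩ := frobenius_bound a ha hgcd hd
  have hclique := hM.1
  have hSplus_ge : ∀ x ∈ Splus d a N, (N : ℤ) ≤ x := by
    rintro x ⟨c, rfl⟩
    have h0' : 0 ≤ ∑ j, (c j : ℤ) * (a j : ℤ) :=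
      Finset.sum_nonneg (fun j _ => mul_nonneg (Int.natCast_nonneg _) (Int.natCast_nonneg _))
    linarith
  -- M is bounded below
  have hlb : ∀ m ∈ M, -((N : ℤ) + F) < m := by
    intro m hm
    by_contra h
    push_neg at h
    obtain ⟨c, hc⟩ := hF (-m - N) (by linarith)
    exact hclique 0 h0 m hm (Or.inl ⟨c, by rw [← hc]; ring⟩)
  by_contra hcon
  push_neg at hcon
  -- the set of k such that i + k*N has an "upward conflict"
  set K : ℤ → Prop := fun k => ∃ m ∈ M, ((i : ℤ) + k * N) - m ∈ Splus d a N with hK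
  -- K is nonempty
  have hKne : ∃ k, K k := by
    obtain ⟨c, hc⟩ := residue_hit a hgcd N hN ((i : ℤ) - N)
    obtain ⟨k, hk⟩ := hc
    refine ⟨k, 0, h0, c, ?_⟩
    have : (∑ j, (c j : ℤ) * (a j : ℤ)) = (i : ℤ) - N + N * k := by linarith [hk]
    rw [this]; ring
  -- K is bounded below
  have hKbd : ∀ k : ℤ, K k → min (1 - F - (i : ℤ)) 0 ≤ k := by
    rintro k ⟨m, hm, hks⟩
    have h1 : (N : ℤ) ≤ (i : ℤ) + k * N - m := hSplus_ge _ hks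
    have h2 : -((N : ℤ) + F) < m := hlb m hm
    have h3 : (1 : ℤ) - F - i ≤ k * N := by linarith
    rcases le_or_gt 0 k with h | h
    · exact le_trans (min_le_right _ _) h
    · have hN1 : (1 : ℤ) ≤ (N : ℤ) := by exact_mod_cast hN
      have h4 : k * (N : ℤ) ≤ k * 1 := mul_le_mul_of_nonpos_left hN1 h.le
      have := min_le_left (1 - F - (i : ℤ)) 0
      linarith
  obtain ⟨k₀, hk₀K, hk₀min⟩ := Int.exists_least_of_bdd ⟨_, hKbd⟩ hKne
  set x : ℤ := (i : ℤ) + (k₀ - 1) * N with hx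
  have hxmod : x ≡ (i : ℤ) [ZMOD (N : ℤ)] := by
    rw [Int.modEq_iff_dvd]
    exact ⟨-(k₀ - 1), by rw [hx]; ring⟩
  have hxnotM : x ∉ M := fun hxM => hcon x hxM hxmod
  -- no upward conflict at k₀ - 1
  have hnoup : ∀ m ∈ M, x - m ∉ Splus d a N := by
    intro m hm hsp
    have hKk : K (k₀ - 1) := ⟨m, hm, hsp⟩
    have := hk₀min _ hKk
    omega
  -- no downward conflict at k₀ - 1 either
  have hnodown : ∀ m' ∈ M, m' - x ∉ Splus d a N := by
    rintro m' hm' ⟨c', hc'⟩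
    obtain ⟨m, hm, c, hc⟩ := hk₀K
    apply hclique m' hm' m hm
    refine Or.inl ⟨c + c', ?_⟩
    show m' - m = (N : ℤ) + ∑ j, (((c j + c' j : ℕ)) : ℤ) * (a j : ℤ)
    have hsum : ∑ j, (((c j + c' j : ℕ)) : ℤ) * (a j : ℤ)
        = (∑ j, (c j : ℤ) * (a j : ℤ)) + ∑ j, (c' j : ℤ) * (a j : ℤ) := by
      push_cast
      simp [add_mul, Finset.sum_add_distrib]
    rw [hsum]
    have hxeq : x = (i : ℤ) + (k₀ - 1) * N := hx
    linarith [hc, hc']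
  -- x could be added to M, contradicting maximality
  have hxcl : M ∪ {x} ∈ Cliques d a N := by
    rintro m hm m' hm' hS
    rcases hm with hmM | hmx
    · rcases hm' with hm'M | hm'x
      · exact hclique m hmM m' hm'M hS
      · rcases hm'x with rfl
        rcases hS with h | h
        · exact hnodown m hmM h
        · rw [Set.mem_neg, neg_sub] at h
          exact hnoup m hmM h
    · rcases hmx with rfl
      rcases hm' with hm'M | hm'x
      · rcases hS with h | h
        · exact hnoup m' hm'M h
        · rw [Set.mem_neg, neg_sub] at h
          exact hnodown m' hm'M h
      · rcases hm'x with rfl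
        rcases hS with h | h
        · have := hSplus_ge _ h
          simp at this
          omega
        · rw [Set.mem_neg, neg_sub] at h
          have := hSplus_ge _ h
          simp at this
          omega
  have heq := hM.2 (M ∪ {x}) hxcl Set.subset_union_left
  have : x ∈ M := heq ▸ (Set.mem_union_right M rfl)
  exact hxnotM this
end

section
/- Assume N ≥ 1 and N is an ℕ-linear combination of a_1,…,a_d. Then every element M of 𝔐 contains at most one element in each residue class modulo N; consequently every element of 𝔐 is a finite set of cardinality at most N. -/
lemma pos_mul_mem_Splus (d : ℕ) (a : Fin d → ℕ) (N : ℕ)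
    (hN : ∃ c : Fin d → ℕ, N = ∑ i, c i * a i)
    (x : ℤ) (hx : 0 < x) (hdvd : (N : ℤ) ∣ x) : x ∈ Splus d a N := by
  obtain ⟨c, hc⟩ := hN
  obtain ⟨k, hk⟩ := hdvd
  have hN0 : (0:ℤ) < N := by
    rcases Nat.eq_zero_or_pos N with h | h
    · subst h; simp at hk; omega
    · exact_mod_cast h
  have hk1 : 1 ≤ k := by nlinarith
  refine ⟨fun i => (k - 1).toNat * c i, ?_⟩
  have ht : ((k - 1).toNat : ℤ) = k - 1 := Int.toNat_of_nonneg (by omega)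
  have hsum : ∑ i, (((k - 1).toNat * c i : ℕ) : ℤ) * (a i : ℤ)
      = (k - 1) * ∑ i, (c i : ℤ) * (a i : ℤ) := by
    rw [Finset.mul_sum]
    refine Finset.sum_congr rfl fun i _ => ?_
    push_cast [ht]
    ring
  have hcN : (N : ℤ) = ∑ i, (c i : ℤ) * (a i : ℤ) := by exact_mod_cast hc
  rw [hsum, ← hcN, hk]; ring

theorem stmt_3 (d : ℕ) (a : Fin d → ℕ) (ha : ∀ i, 0 < a i)
    (hgcd : Finset.univ.gcd a = 1) (N : ℕ) (hN1 : 1 ≤ N)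
    (hN : ∃ c : Fin d → ℕ, N = ∑ i, c i * a i)
    (M : Set ℤ) (hM : M ∈ Cliques d a N) :
    (∀ m ∈ M, ∀ m' ∈ M, m ≡ m' [ZMOD (N : ℤ)] → m = m') ∧
      M.Finite ∧ M.ncard ≤ N := by
  have key : ∀ m ∈ M, ∀ m' ∈ M, m ≡ m' [ZMOD (N : ℤ)] → m = m' := by
    intro m hm m' hm' hmod
    by_contra hne
    rcases lt_trichotomy m m' with h | h | h
    · exact hM m' hm' m hm (Or.inl (pos_mul_mem_Splus d a N hN (m' - m) (by omega)
        (by simpa using (Int.ModEq.dvd hmod))))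
    · exact hne h
    · have : (N : ℤ) ∣ m - m' := Int.ModEq.dvd hmod.symm
      exact hM m hm m' hm' (Or.inl (pos_mul_mem_Splus d a N hN (m - m') (by omega) this))
  refine ⟨key, ?_⟩
  haveI : NeZero N := ⟨by omega⟩
  have hinj : Function.Injective (fun x : M => ((x : ℤ) : ZMod N)) := by
    intro x y hxy
    have : ((x : ℤ) : ZMod N) = ((y : ℤ) : ZMod N) := hxy
    rw [ZMod.intCast_eq_intCast_iff'] at this
    exact Subtype.ext (key x x.2 y y.2 this)
  have hfin : M.Finite := Set.finite_coe_iff.mp (Finite.of_injective _ hinj)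
  refine ⟨hfin, ?_⟩
  have := Nat.card_le_card_of_injective _ hinj
  rwa [Nat.card_coe_set_eq, Nat.card_zmod] at this
end

section
/- Assume N ≥ 1 and N is an ℕ-linear combination of a_1,…,a_d. Let M be a maximal element of 𝔐 (hence M is finite and nonempty) and let m_max = max M. Then for every nonempty subset J ⊆ {1,…,d} with Σ_{j∈J} a_j < N, the integer m_max − Σ_{j∈J} a_j belongs to M. -/
lemma le_of_mem_Splus {d : ℕ} {a : Fin d → ℕ} {N : ℕ} {x : ℤ}
    (hx : x ∈ Splus d a N) : (N : ℤ) ≤ x := by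
  obtain ⟨c, rfl⟩ := hx
  have : (0:ℤ) ≤ ∑ i, (c i : ℤ) * (a i : ℤ) :=
    Finset.sum_nonneg fun i _ => by positivity
  linarith

lemma bezout_finset (d : ℕ) (a : Fin d → ℕ) (s : Finset (Fin d)) :
    ∃ z : Fin d → ℤ, ((s.gcd a : ℕ) : ℤ) = ∑ i ∈ s, z i * (a i : ℤ) := by
  classical
  induction s using Finset.induction_on with
  | empty => exact ⟨0, by simp⟩
  | @insert b t hb ih =>
    obtain ⟨z, hz⟩ := ih
    refine ⟨fun i => if i = b then Nat.gcdA (a b) (t.gcd a)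
      else Nat.gcdB (a b) (t.gcd a) * z i, ?_⟩
    rw [Finset.gcd_insert, Finset.sum_insert hb]
    have h1 : ((GCDMonoid.gcd (a b) (t.gcd a) : ℕ) : ℤ)
        = (a b : ℤ) * Nat.gcdA (a b) (t.gcd a) + ((t.gcd a : ℕ) : ℤ) * Nat.gcdB (a b) (t.gcd a) := by
      exact_mod_cast Nat.gcd_eq_gcd_ab (a b) (t.gcd a)
    rw [h1, hz]
    have h2 : ∑ i ∈ t, (if i = b then Nat.gcdA (a b) (t.gcd a)
        else Nat.gcdB (a b) (t.gcd a) * z i) * (a i : ℤ)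
        = Nat.gcdB (a b) (t.gcd a) * ∑ i ∈ t, z i * (a i : ℤ) := by
      rw [Finset.mul_sum]
      refine Finset.sum_congr rfl fun i hi => ?_
      have : i ≠ b := fun h => hb (h ▸ hi)
      rw [if_neg this]; ring
    rw [h2]
    simp only [eq_self_iff_true, if_true]
    ring

lemma frob (d : ℕ) (a : Fin d → ℕ) (hgcd : Finset.univ.gcd a = 1) :
    ∃ B : ℕ, ∀ n, B ≤ n → ∃ c : Fin d → ℕ, n = ∑ i, c i * a i := by
  classical
  obtain ⟨z, hz⟩ := bezout_finset d a Finset.univ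
  rw [hgcd] at hz
  set p : ℕ := ∑ i, (z i).toNat * a i with hp
  set q : ℕ := ∑ i, (-(z i)).toNat * a i with hq
  have hpq : p = q + 1 := by
    have h1 : (p : ℤ) - (q : ℤ) = 1 := by
      rw [hp, hq]
      push_cast
      rw [← Finset.sum_sub_distrib]
      have hcong : ∀ i ∈ Finset.univ, ((z i).toNat : ℤ) * (a i : ℤ)
          - ((-z i).toNat : ℤ) * (a i : ℤ) = z i * (a i : ℤ) := by
        intro i _
        rw [← sub_mul]
        congr 1
        omega
      rw [Finset.sum_congr rfl hcong, ← hz]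
      norm_num
    omega
  refine ⟨q * q, fun n hn => ?_⟩
  rcases Nat.eq_zero_or_pos q with hq0 | hqpos
  · refine ⟨fun i => n * (z i).toNat, ?_⟩
    have h2 : ∑ i, n * (z i).toNat * a i = n * p := by
      rw [hp, Finset.mul_sum]
      exact Finset.sum_congr rfl fun i _ => (mul_assoc _ _ _)
    have hp1 : p = 1 := by omega
    rw [h2, hp1, mul_one]
  · set r := n % q with hr
    set sd := n / q with hsd
    have hrq : r < q := Nat.mod_lt _ hqpos
    have hqsd : q ≤ sd := (Nat.le_div_iff_mul_le hqpos).2 hn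
    have hsr : r ≤ sd := le_trans hrq.le hqsd
    refine ⟨fun i => r * (z i).toNat + (sd - r) * (-(z i)).toNat, ?_⟩
    have expand : ∑ i, (r * (z i).toNat + (sd - r) * (-(z i)).toNat) * a i
        = r * p + (sd - r) * q := by
      rw [hp, hq, Finset.mul_sum, Finset.mul_sum, ← Finset.sum_add_distrib]
      refine Finset.sum_congr rfl fun i _ => ?_
      ring
    rw [expand]
    have hdm : q * sd + r = n := Nat.div_add_mod n q
    zify [hsr]
    have hpq' : (p : ℤ) = (q : ℤ) + 1 := by exact_mod_cast hpq
    have hdm' : (q : ℤ) * sd + r = n := by exact_mod_cast hdm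
    rw [hpq']
    linear_combination -hdm'

theorem stmt_4 (d : ℕ) (a : Fin d → ℕ) (ha : ∀ i, 0 < a i)
    (hgcd : Finset.univ.gcd a = 1) (N : ℕ) (hN1 : 1 ≤ N)
    (hN : ∃ c : Fin d → ℕ, N = ∑ i, c i * a i)
    (M : Set ℤ) (hM : IsMaximalClique d a N M) :
    ∃ mmax : ℤ, IsGreatest M mmax ∧
      ∀ J : Finset (Fin d), J.Nonempty → (∑ j ∈ J, a j) < N →
        mmax - ∑ j ∈ J, (a j : ℤ) ∈ M := by
  classical
  obtain ⟨B, hB⟩ := frob d a hgcd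
  have h0 : (0:ℤ) ∉ Sfull d a N := by
    rintro (h | h)
    · have := le_of_mem_Splus h; omega
    · rw [Set.mem_neg, neg_zero] at h
      have := le_of_mem_Splus h; omega
  have hne : M.Nonempty := by
    by_contra h
    rw [Set.not_nonempty_iff_eq_empty] at h
    have hc : ({0} : Set ℤ) ∈ Cliques d a N := by
      intro m hm m' hm'
      simp only [Set.mem_singleton_iff] at hm hm'
      subst hm; subst hm'
      simpa using h0
    have := hM.2 _ hc (by simp [h])
    simp [h] at this
  obtain ⟨m0, hm0⟩ := hne
  have hbdd : ∀ z ∈ M, z ≤ m0 + N + B := by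
    intro x hx
    by_contra h
    push_neg at h
    apply hM.1 x hx m0 hm0
    left
    obtain ⟨c, hc⟩ := hB (x - m0 - N).toNat (by omega)
    refine ⟨c, ?_⟩
    have h2 : ((x - m0 - N).toNat : ℤ) = ∑ i, (c i : ℤ) * (a i : ℤ) := by
      exact_mod_cast hc
    omega
  obtain ⟨mmax, hmm, hmax⟩ :=
    Int.exists_greatest_of_bdd ⟨m0 + N + B, hbdd⟩ ⟨m0, hm0⟩
  refine ⟨mmax, ⟨hmm, hmax⟩, ?_⟩
  intro J hJ hJN
  set s : ℤ := ∑ j ∈ J, (a j : ℤ) with hs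
  have hs_pos : 0 < s :=
    Finset.sum_pos (fun j _ => by exact_mod_cast ha j) hJ
  have hsN : s < N := by
    rw [hs]
    exact_mod_cast hJN
  have key : ∀ m' ∈ M, mmax - s - m' ∉ Splus d a N := by
    rintro m' hm' ⟨c, hc⟩
    apply hM.1 mmax hmm m' hm'
    left
    refine ⟨fun i => c i + if i ∈ J then 1 else 0, ?_⟩
    have h3 : ∑ i, ((c i + if i ∈ J then 1 else 0 : ℕ) : ℤ) * (a i : ℤ)
        = (∑ i, (c i : ℤ) * (a i : ℤ)) + s := by
      rw [hs]
      push_cast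
      simp [add_mul, ite_mul, one_mul, zero_mul, Finset.sum_add_distrib,
        Finset.sum_ite_mem, Finset.univ_inter]
    linarith
  have key2 : ∀ m' ∈ M, m' - (mmax - s) ∉ Splus d a N := by
    intro m' hm' hmem
    have h4 := le_of_mem_Splus hmem
    have h5 := hmax m' hm'
    omega
  have hclique : insert (mmax - s) M ∈ Cliques d a N := by
    intro m hm m' hm'
    rcases Set.mem_insert_iff.1 hm with rfl | hmM <;>
      rcases Set.mem_insert_iff.1 hm' with rfl | hm'M
    · simpa using h0
    · rintro (h | h)
      · exact key _ hm'M h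
      · rw [Set.mem_neg, neg_sub] at h
        exact key2 _ hm'M h
    · rintro (h | h)
      · exact key2 _ hmM h
      · rw [Set.mem_neg, neg_sub] at h
        exact key _ hmM h
    · exact hM.1 _ hmM _ hm'M
  have heq := hM.2 _ hclique (Set.subset_insert _ _)
  rw [← heq]
  exact Set.mem_insert _ _
end

section
/- Assume N ≥ 1 and N is an ℕ-linear combination of a_1,…,a_d. Let M be a maximal element of 𝔐 (hence M is finite and nonempty) and let m_max = max M. Then the set (M ∖ {m_max}) ∪ {m_max − N} is again a maximal element of 𝔐. -/
lemma finset_gcd_int_comb {ι : Type*} [DecidableEq ι] (a : ι → ℕ) (s : Finset ι) :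
    ∃ z : ι → ℤ, ((s.gcd a : ℕ) : ℤ) = ∑ i ∈ s, z i * (a i : ℤ) := by
  induction s using Finset.induction with
  | empty => exact ⟨0, by simp⟩
  | @insert i s hnotmem ih =>
    obtain ⟨z, hz⟩ := ih
    refine ⟨Function.update (fun j => Nat.gcdB (a i) (s.gcd a) * z j) i
      (Nat.gcdA (a i) (s.gcd a)), ?_⟩
    have h2 : (insert i s).gcd a = Nat.gcd (a i) (s.gcd a) := Finset.gcd_insert
    rw [h2, Finset.sum_insert hnotmem, Function.update_self,
      Finset.sum_congr rfl (fun j hj => by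
        rw [Function.update_of_ne (by rintro rfl; exact hnotmem hj)])]
    rw [Nat.gcd_eq_gcd_ab (a i) (s.gcd a), hz, Finset.sum_mul]
    rw [Finset.sum_congr rfl (fun (j : ι) (_ : j ∈ s) =>
      show _ = Nat.gcdB (a i) (s.gcd a) * z j * (a j : ℤ) by ring)]
    ring

lemma exists_comb_bound {d : ℕ} (a : Fin d → ℕ) (hgcd : Finset.univ.gcd a = 1) :
    ∃ B : ℕ, ∀ n : ℕ, B ≤ n → ∃ c : Fin d → ℕ, (n : ℤ) = ∑ i, (c i : ℤ) * (a i : ℤ) := by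
  obtain ⟨z, hz⟩ := finset_gcd_int_comb a Finset.univ
  rw [hgcd] at hz
  have hz1 : (1 : ℤ) = ∑ i, z i * (a i : ℤ) := by exact_mod_cast hz
  set p : Fin d → ℕ := fun i => (z i).toNat with hp
  set q : Fin d → ℕ := fun i => (-z i).toNat with hq
  have hpq : ∀ i, (p i : ℤ) - (q i : ℤ) = z i := fun i => Int.toNat_sub_toNat_neg (z i)
  set u : ℕ := ∑ i, p i * a i with hu
  set v : ℕ := ∑ i, q i * a i with hv
  have huz : (u : ℤ) = ∑ i, (p i : ℤ) * (a i : ℤ) := by push_cast [hu]; rfl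
  have hvz : (v : ℤ) = ∑ i, (q i : ℤ) * (a i : ℤ) := by push_cast [hv]; rfl
  have huv : (u : ℤ) = (v : ℤ) + 1 := by
    have h3 : (u : ℤ) - v = 1 := by
      rw [huz, hvz, ← Finset.sum_sub_distrib, hz1]
      exact Finset.sum_congr rfl (fun i _ => by rw [← hpq i]; ring)
    linarith
  refine ⟨v * v, fun n hn => ?_⟩
  rcases Nat.eq_zero_or_pos v with hv0 | hv0
  · refine ⟨fun i => n * p i, ?_⟩
    have : (1 : ℤ) = ∑ i, (p i : ℤ) * (a i : ℤ) := by
      rw [← huz, huv]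
      rw [hv0]; norm_num
    calc (n : ℤ) = n * 1 := by ring
    _ = n * ∑ i, (p i : ℤ) * (a i : ℤ) := by rw [← this]
    _ = ∑ i, ((n * p i : ℕ) : ℤ) * (a i : ℤ) := by rw [Finset.mul_sum]; push_cast; ring_nf
  · set r : ℕ := n % v with hr
    set s : ℕ := n / v with hs
    have hrs : v * s + r = n := Nat.div_add_mod n v
    have hrlt : r < v := Nat.mod_lt n hv0
    have hsr : r ≤ s := le_trans hrlt.le (Nat.le_div_iff_mul_le hv0 |>.mpr (by nlinarith))
    obtain ⟨k, hk⟩ : ∃ k, s = r + k := ⟨s - r, by omega⟩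
    refine ⟨fun i => r * p i + k * q i, ?_⟩
    have expand : ∑ i, (((r * p i + k * q i : ℕ)) : ℤ) * (a i : ℤ)
        = (r : ℤ) * u + (k : ℤ) * v := by
      rw [huz, hvz, Finset.mul_sum, Finset.mul_sum, ← Finset.sum_add_distrib]
      exact Finset.sum_congr rfl (fun i _ => by push_cast; ring)
    rw [expand, huv]
    have hnz : (v : ℤ) * ((r : ℤ) + k) + r = n := by exact_mod_cast (by rw [← hk]; exact hrs)
    linear_combination -hnz

theorem stmt_5 (d : ℕ) (a : Fin d → ℕ) (ha : ∀ i, 0 < a i)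
    (hgcd : Finset.univ.gcd a = 1) (N : ℕ) (hN1 : 1 ≤ N)
    (hN : ∃ c : Fin d → ℕ, N = ∑ i, c i * a i)
    (M : Set ℤ) (hM : IsMaximalClique d a N M) :
    ∃ mmax : ℤ, IsGreatest M mmax ∧
      IsMaximalClique d a N ((M \ {mmax}) ∪ {mmax - (N : ℤ)}) := by
  classical
  -- basic facts
  have hcombadd : ∀ s t : ℤ, (∃ c : Fin d → ℕ, s = ∑ i, (c i : ℤ) * (a i : ℤ)) →
      (∃ c : Fin d → ℕ, t = ∑ i, (c i : ℤ) * (a i : ℤ)) →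
      (∃ c : Fin d → ℕ, s + t = ∑ i, (c i : ℤ) * (a i : ℤ)) := by
    rintro s t ⟨c, rfl⟩ ⟨e, rfl⟩
    refine ⟨fun i => c i + e i, ?_⟩
    have h1 : ∑ i, (((c i + e i : ℕ)) : ℤ) * (a i : ℤ)
        = ∑ i, ((c i : ℤ) * (a i : ℤ) + (e i : ℤ) * (a i : ℤ)) :=
      Finset.sum_congr rfl (fun i _ => by push_cast; ring)
    rw [h1, Finset.sum_add_distrib]
  have hSadd : ∀ x ∈ Splus d a N, ∀ t : ℤ,
      (∃ c : Fin d → ℕ, t = ∑ i, (c i : ℤ) * (a i : ℤ)) → x + t ∈ Splus d a N := by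
    rintro x ⟨c, rfl⟩ t ht
    obtain ⟨e, he⟩ := hcombadd _ _ ⟨c, rfl⟩ ht
    exact ⟨e, by rw [← he]; ring⟩
  have hNS : (N : ℤ) ∈ Splus d a N := ⟨0, by simp⟩
  have hNcomb : ∃ c : Fin d → ℕ, (N : ℤ) = ∑ i, (c i : ℤ) * (a i : ℤ) := by
    obtain ⟨c, hc⟩ := hN
    exact ⟨c, by rw [hc]; push_cast; rfl⟩
  have hge : ∀ x ∈ Splus d a N, (N : ℤ) ≤ x := by
    rintro x ⟨c, rfl⟩
    have : (0 : ℤ) ≤ ∑ i, (c i : ℤ) * (a i : ℤ) :=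
      Finset.sum_nonneg (fun i _ => by positivity)
    linarith
  have hpos : ∀ x ∈ Splus d a N, (0 : ℤ) < x := fun x hx =>
    lt_of_lt_of_le (by exact_mod_cast hN1) (hge x hx)
  have hsym : ∀ x : ℤ, x ∈ Sfull d a N → -x ∈ Sfull d a N := by
    rintro x (hx | hx)
    · exact Or.inr (by simpa [Set.mem_neg] using hx)
    · exact Or.inl (by rw [Set.mem_neg] at hx; exact hx)
  have h0 : (0 : ℤ) ∉ Sfull d a N := by
    rintro (h | h)
    · exact absurd (hpos 0 h) (lt_irrefl 0)
    · rw [Set.mem_neg, neg_zero] at h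
      exact absurd (hpos 0 h) (lt_irrefl 0)
  -- conflict lemma
  have hconf : ∀ x : ℤ, x ∉ M → ∃ m ∈ M, x - m ∈ Sfull d a N := by
    intro x hx
    by_contra hcon
    push_neg at hcon
    have hcl : M ∪ {x} ∈ Cliques d a N := by
      rintro p (hp | hp) q (hq | hq)
      · exact hM.1 p hp q hq
      · rw [Set.mem_singleton_iff] at hq; subst hq
        intro hS
        have := hsym _ hS
        rw [neg_sub] at this
        exact hcon p hp this
      · rw [Set.mem_singleton_iff] at hp; subst hp
        exact hcon q hq
      · rw [Set.mem_singleton_iff] at hp hq; subst hp; subst hq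
        simpa [sub_self] using h0
    have heq := hM.2 _ hcl Set.subset_union_left
    have hxM : x ∈ M := heq ▸ (Set.mem_union_right M rfl)
    exact hx hxM
  -- bound and greatest element
  obtain ⟨B, hB⟩ := exists_comb_bound a hgcd
  obtain ⟨m0, hm0⟩ : M.Nonempty := by
    rcases M.eq_empty_or_nonempty with he | h
    · exfalso
      have hcl : ({(0 : ℤ)} : Set ℤ) ∈ Cliques d a N := by
        rintro p hp q hq
        rw [Set.mem_singleton_iff] at hp hq; subst hp; subst hq
        simpa [sub_self] using h0
      have h1 := hM.2 _ hcl (by rw [he]; exact Set.empty_subset _)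
      rw [he] at h1
      exact Set.singleton_ne_empty (0:ℤ) h1
    · exact h
  have hbdd : ∀ m ∈ M, m ≤ m0 + N + B := by
    intro m hm
    by_contra hgt
    push_neg at hgt
    have ht : (B : ℤ) ≤ m - m0 - N := by push_cast at hgt ⊢; linarith
    have ht0 : (0 : ℤ) ≤ m - m0 - N := le_trans (by positivity) ht
    have htn : ((m - m0 - N).toNat : ℤ) = m - m0 - N := Int.toNat_of_nonneg ht0
    obtain ⟨c, hc⟩ := hB (m - m0 - N).toNat (by omega)
    have hmem : m - m0 ∈ Splus d a N := ⟨c, by rw [← hc, htn]; ring⟩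
    exact hM.1 m hm m0 hm0 (Or.inl hmem)
  obtain ⟨mmax, hmm, hub⟩ :=
    Int.exists_greatest_of_bdd ⟨m0 + N + B, fun z hz => hbdd z hz⟩ ⟨m0, hm0⟩
  refine ⟨mmax, ⟨hmm, fun z hz => hub z hz⟩, ?_⟩
  -- cliqueness of the mutated set
  have hKdiff : ∀ p ∈ M, p ≠ mmax → p - (mmax - (N : ℤ)) ∉ Sfull d a N := by
    intro p hp hpne
    rintro (hS | hS)
    · obtain ⟨c, hc⟩ := hS
      have hple : p < mmax := lt_of_le_of_ne (hub p hp) hpne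
      have hnn : (0 : ℤ) ≤ ∑ i, (c i : ℤ) * (a i : ℤ) :=
        Finset.sum_nonneg (fun i _ => by positivity)
      linarith
    · rw [Set.mem_neg] at hS
      obtain ⟨c, hc⟩ := hS
      have h5 : (N : ℤ) + ((N : ℤ) + ∑ i, (c i : ℤ) * (a i : ℤ)) ∈ Splus d a N :=
        hSadd _ hNS _ (hcombadd _ _ hNcomb ⟨c, rfl⟩)
      have h6 : mmax - p = (N : ℤ) + ((N : ℤ) + ∑ i, (c i : ℤ) * (a i : ℤ)) := by
        linear_combination hc
      exact hM.1 mmax hmm p hp (Or.inl (h6 ▸ h5))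
  have hKcl : ((M \ {mmax}) ∪ {mmax - (N : ℤ)}) ∈ Cliques d a N := by
    rintro p (⟨hp, hpne⟩ | hp) q (⟨hq, hqne⟩ | hq)
    · exact hM.1 p hp q hq
    · rw [Set.mem_singleton_iff] at hq; subst hq
      exact hKdiff p hp (by simpa using hpne)
    · rw [Set.mem_singleton_iff] at hp; subst hp
      intro hS
      have := hsym _ hS
      rw [neg_sub] at this
      exact hKdiff q hq (by simpa using hqne) this
    · rw [Set.mem_singleton_iff] at hp hq; subst hp; subst hq
      simpa [sub_self] using h0
  refine ⟨hKcl, fun M'' hM'' hsub => ?_⟩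
  apply Set.Subset.antisymm _ hsub
  intro x hx
  by_contra hxK
  have hcompat : ∀ m ∈ ((M \ {mmax}) ∪ {mmax - (N : ℤ)}), x - m ∉ Sfull d a N :=
    fun m hm => hM'' x hx m (hsub hm)
  have hcompat' : ∀ m ∈ ((M \ {mmax}) ∪ {mmax - (N : ℤ)}), m - x ∉ Sfull d a N := by
    intro m hm hS
    have := hsym _ hS
    rw [neg_sub] at this
    exact hcompat m hm this
  have hxmmN : x ≠ mmax - N := fun h => hxK (h ▸ Set.mem_union_right _ rfl)
  have hxmax : x ≠ mmax := by
    rintro rfl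
    exact hcompat _ (Set.mem_union_right _ rfl)
      (Or.inl ⟨0, by simp⟩)
  have hxM : x ∉ M := fun h => hxK (Or.inl ⟨h, by simpa using hxmax⟩)
  obtain ⟨m0', hm0M, hm0S⟩ := hconf x hxM
  have hm0eq : m0' = mmax := by
    by_contra hne
    exact hcompat m0' (Or.inl ⟨hm0M, by simpa using hne⟩) hm0S
  rw [hm0eq] at hm0S
  rcases hm0S with hS | hS
  · -- x - mmax ∈ Splus : then x - (mmax - N) ∈ Splus, conflict with mmax - N
    have h5 := hSadd _ hS _ hNcomb
    have h6 : x - (mmax - (N : ℤ)) = (x - mmax) + N := by ring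
    exact hcompat _ (Set.mem_union_right _ rfl) (Or.inl (h6 ▸ h5))
  · rw [Set.mem_neg] at hS
    obtain ⟨s, hs⟩ := hS
    set S := ∑ i, (s i : ℤ) * (a i : ℤ) with hSdef
    have hSne : S ∉ Sfull d a N := by
      have h7 : S = (mmax - N) - x := by linear_combination -hs
      rw [h7]
      exact hcompat' _ (Set.mem_union_right _ rfl)
    have hS0 : S ≠ 0 := by
      intro h0'
      apply hxmmN
      have h8 : mmax - x = (N : ℤ) + S := by linear_combination hs
      rw [h0'] at h8
      linarith
    by_cases hyM : x + N ∈ M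
    · rcases eq_or_ne (x + (N : ℤ)) mmax with heq | hne
      · apply hS0
        linear_combination -hs - heq
      · apply hcompat (x + N) (Or.inl ⟨hyM, by simpa using hne⟩)
        right
        rw [Set.mem_neg]
        have h9 : -(x - (x + (N : ℤ))) = (N : ℤ) := by ring
        rw [h9]
        exact hNS
    · obtain ⟨m1, hm1M, hm1S⟩ := hconf (x + N) hyM
      rcases eq_or_ne m1 mmax with rfl | hne
      · apply hSne
        have h8 : -((x + (N : ℤ)) - m1) = S := by linear_combination hs
        have := hsym _ hm1S
        rwa [h8] at this
      · rcases hm1S with hS2 | hS2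
        · obtain ⟨t, ht⟩ := hS2
          have hcomb2 := hcombadd _ _ ⟨s, hSdef⟩ ⟨t, rfl⟩
          have h10 := hSadd _ hNS _ hcomb2
          have h11 : mmax - m1 = (N : ℤ) + (S + ∑ i, (t i : ℤ) * (a i : ℤ)) := by
            linear_combination hs + ht
          exact hM.1 mmax hmm m1 hm1M (Or.inl (h11 ▸ h10))
        · rw [Set.mem_neg] at hS2
          obtain ⟨t, ht⟩ := hS2
          have h10 := hSadd _ hNS _ (hcombadd _ _ hNcomb ⟨t, rfl⟩)
          have h11 : m1 - x = (N : ℤ) + ((N : ℤ) + ∑ i, (t i : ℤ) * (a i : ℤ)) := by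
            linear_combination ht
          exact hcompat' m1 (Or.inl ⟨hm1M, by simpa using hne⟩) (Or.inl (h11 ▸ h10))
end

section
/- Assume N ≥ 1 and N is an ℕ-linear combination of a_1,…,a_d. Then for every ν ∈ ℤ the interval {ν, ν+1, …, ν+N−1} of N consecutive integers is a maximal element of 𝔐. -/
theorem stmt_6 (d : ℕ) (a : Fin d → ℕ) (ha : ∀ i, 0 < a i)
    (hgcd : Finset.univ.gcd a = 1) (N : ℕ) (hN1 : 1 ≤ N)
    (hN : ∃ c : Fin d → ℕ, N = ∑ i, c i * a i) (ν : ℤ) :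
    IsMaximalClique d a N (Set.Ico ν (ν + (N : ℤ))) := by
  obtain ⟨c, hc⟩ := hN
  have hcZ : (N : ℤ) = ∑ i, (c i : ℤ) * (a i : ℤ) := by
    rw [hc]; push_cast; rfl
  have hNpos : (0 : ℤ) < (N : ℤ) := by exact_mod_cast hN1
  -- any positive multiple of N lies in Splus
  have hmul : ∀ j : ℤ, 1 ≤ j → j * (N : ℤ) ∈ Splus d a N := by
    intro j hj
    refine ⟨fun i => (j - 1).toNat * c i, ?_⟩
    have hjt : ((j - 1).toNat : ℤ) = j - 1 := Int.toNat_of_nonneg (by omega)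
    have : ∑ i, (((j - 1).toNat * c i : ℕ) : ℤ) * (a i : ℤ)
        = (j - 1) * ∑ i, (c i : ℤ) * (a i : ℤ) := by
      rw [Finset.mul_sum]
      refine Finset.sum_congr rfl fun i _ => ?_
      push_cast [hjt]; ring
    rw [this, ← hcZ]; ring
  -- nonnegativity of sums
  have hsum_nonneg : ∀ (c' : Fin d → ℕ), (0 : ℤ) ≤ ∑ i, (c' i : ℤ) * (a i : ℤ) :=
    fun c' => Finset.sum_nonneg fun i _ => by positivity
  constructor
  · -- clique
    intro m hm m' hm' hmem
    simp only [Set.mem_Ico] at hm hm'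
    rcases hmem with ⟨c', hc'⟩ | hneg
    · have := hsum_nonneg c'
      omega
    · rw [Set.mem_neg] at hneg
      obtain ⟨c', hc'⟩ := hneg
      have := hsum_nonneg c'
      omega
  · -- maximality
    intro M' hM' hsub
    refine Set.Subset.antisymm ?_ hsub
    intro m hm
    by_contra hnot
    simp only [Set.mem_Ico, not_and, not_lt] at hnot
    rcases lt_or_ge m ν with hlt | hge
    · -- m < ν : find m' = m + j*N in the interval
      set t : ℤ := ν - m with ht
      set q : ℤ := (t - 1) / N with hq
      set r : ℤ := (t - 1) % N with hr
      have hdm : q * N + r = t - 1 := by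
        rw [hq, hr, mul_comm]; exact Int.mul_ediv_add_emod _ _
      have hr0 : 0 ≤ r := Int.emod_nonneg _ (by omega)
      have hrN : r < N := Int.emod_lt_of_pos _ hNpos
      have hq0 : 0 ≤ q := Int.ediv_nonneg (by omega) (by omega)
      set m' : ℤ := m + (q + 1) * N with hm'
      have hm'mem : m' ∈ Set.Ico ν (ν + (N : ℤ)) := by
        simp only [Set.mem_Ico]
        constructor <;> nlinarith
      have : m - m' ∈ Sfull d a N := by
        right
        rw [Set.mem_neg]
        have : -(m - m') = (q + 1) * N := by rw [hm']; ring
        rw [this]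
        exact hmul _ (by omega)
      exact hM' m hm m' (hsub hm'mem) this
    · have hge' : ν + (N : ℤ) ≤ m := hnot hge
      set t : ℤ := m - ν with ht
      set q : ℤ := t / N with hq
      set r : ℤ := t % N with hr
      have hdm : q * N + r = t := by rw [hq, hr, mul_comm]; exact Int.mul_ediv_add_emod _ _
      have hr0 : 0 ≤ r := Int.emod_nonneg _ (by omega)
      have hrN : r < N := Int.emod_lt_of_pos _ hNpos
      have hq1 : 1 ≤ q := by nlinarith
      set m' : ℤ := ν + r with hm'
      have hm'mem : m' ∈ Set.Ico ν (ν + (N : ℤ)) := by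
        simp only [Set.mem_Ico]; omega
      have : m - m' ∈ Sfull d a N := by
        left
        have : m - m' = q * N := by omega
        rw [this]
        exact hmul _ hq1
      exact hM' m hm m' (hsub hm'mem) this
end

section
/- With 𝒮₊ = {7 + 2a + 3b : a, b ∈ ℕ}, 𝒮 = 𝒮₊ ∪ (−𝒮₊), and 𝔐 the collection of subsets M ⊆ ℤ all of whose pairwise differences avoid 𝒮: the set M₀ = {−4, −2, −1, 0, 1, 2, 4} is a maximal element of 𝔐, and M₀ is not of the form {ν, ν+1, …, ν+6} for any ν ∈ ℤ. -/
/-- `𝒮₊ = {7 + 2a + 3b : a, b ∈ ℕ}` inside `ℤ`. -/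
def SplusEx : Set ℤ := { x : ℤ | ∃ a b : ℕ, x = 7 + 2 * (a : ℤ) + 3 * (b : ℤ) }

/-- `𝒮 = 𝒮₊ ∪ (−𝒮₊)`. -/
def SEx : Set ℤ := SplusEx ∪ (-SplusEx)

/-- The collection `𝔐` of subsets of `ℤ` all of whose pairwise differences avoid `𝒮`. -/
def CliquesEx : Set (Set ℤ) := { M : Set ℤ | ∀ m ∈ M, ∀ m' ∈ M, m - m' ∉ SEx }

lemma mem_SplusEx (x : ℤ) : x ∈ SplusEx ↔ x = 7 ∨ 9 ≤ x := by
  constructor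
  · rintro ⟨a, b, rfl⟩
    rcases Nat.eq_zero_or_pos a with rfl | ha
    · rcases Nat.eq_zero_or_pos b with rfl | hb
      · left; norm_num
      · right; have : (1 : ℤ) ≤ (b : ℤ) := by exact_mod_cast hb
        omega
    · right; have : (1 : ℤ) ≤ (a : ℤ) := by exact_mod_cast ha
      omega
  · rintro (rfl | hx)
    · exact ⟨0, 0, by norm_num⟩
    · rcases Int.even_or_odd x with he | ho
      · obtain ⟨k, hk⟩ := he
        refine ⟨(x - 10).toNat / 2, 1, ?_⟩
        have h10 : 10 ≤ x := by omega
        have : ((x - 10).toNat : ℤ) = x - 10 := Int.toNat_of_nonneg (by omega)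
        have hev : (x - 10).toNat % 2 = 0 := by omega
        have : ((x - 10).toNat / 2 : ℤ) = (x - 10) / 2 := by
          push_cast [Int.natCast_ediv] at *
          omega
        omega
      · obtain ⟨k, hk⟩ := ho
        refine ⟨(x - 7).toNat / 2, 0, ?_⟩
        have : ((x - 7).toNat : ℤ) = x - 7 := Int.toNat_of_nonneg (by omega)
        have hev : (x - 7).toNat % 2 = 0 := by omega
        have : ((x - 7).toNat / 2 : ℤ) = (x - 7) / 2 := by
          push_cast [Int.natCast_ediv] at *
          omega
        omega

lemma mem_SEx (x : ℤ) : x ∈ SEx ↔ x = 7 ∨ 9 ≤ x ∨ x = -7 ∨ x ≤ -9 := by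
  simp only [SEx, Set.mem_union, Set.mem_neg, mem_SplusEx]
  omega

theorem stmt_8 :
    (({-4, -2, -1, 0, 1, 2, 4} : Set ℤ) ∈ CliquesEx ∧
      ∀ M' ∈ CliquesEx, ({-4, -2, -1, 0, 1, 2, 4} : Set ℤ) ⊆ M' →
        M' = ({-4, -2, -1, 0, 1, 2, 4} : Set ℤ)) ∧
    ¬ ∃ ν : ℤ, ({-4, -2, -1, 0, 1, 2, 4} : Set ℤ) = Set.Ico ν (ν + 7) := by
  refine ⟨⟨?_, ?_⟩, ?_⟩
  · intro m hm m' hm'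
    simp only [Set.mem_insert_iff, Set.mem_singleton_iff] at hm hm'
    rw [mem_SEx]
    omega
  · intro M' hM' hsub
    apply Set.Subset.antisymm _ hsub
    intro m hm
    have h1 := hM' m hm 4 (hsub (by simp))
    have h2 := hM' m hm (-4) (hsub (by simp))
    rw [mem_SEx] at h1 h2
    simp only [Set.mem_insert_iff, Set.mem_singleton_iff]
    omega
  · rintro ⟨ν, h⟩
    have h1 : (-4 : ℤ) ∈ Set.Ico ν (ν + 7) := by rw [← h]; simp
    have h2 : (4 : ℤ) ∈ Set.Ico ν (ν + 7) := by rw [← h]; simp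
    simp only [Set.mem_Ico] at h1 h2
    omega
end

section
/- Assume α_1, …, α_d span E and the family (α_i) is weakly symmetric. Then for every λ ∈ E, the set Φ_λ = cl(B_λ) ∖ B_λ is homeomorphic to the unit sphere of the orthogonal complement H_λ^⊥ of H_λ in E (a sphere of dimension s − 1 − dim H_λ). -/
open Module

/-- The family `α` is weakly symmetric: for every line `ℓ` through the origin (i.e.
one-dimensional subspace of `E`), the convex cone generated by the `α i` lying on `ℓ`
is either `{0}` or all of `ℓ`. -/
def WeaklySymmetric {E : Type*} [NormedAddCommGroup E] [InnerProductSpace ℝ E]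
    {d : ℕ} (α : Fin d → E) : Prop :=
  ∀ ℓ : Submodule ℝ E, finrank ℝ ℓ = 1 →
    ((Submodule.span {c : ℝ // 0 ≤ c} (Set.range α ∩ ℓ) : PointedCone ℝ E) : Set E) = {0} ∨
    ((Submodule.span {c : ℝ // 0 ≤ c} (Set.range α ∩ ℓ) : PointedCone ℝ E) : Set E) = (ℓ : Set E)

/-- `T_λ = {i : ⟪λ, α i⟫ < 0}`. -/
def Tneg {E : Type*} [NormedAddCommGroup E] [InnerProductSpace ℝ E]
    {d : ℕ} (α : Fin d → E) (l : E) : Set (Fin d) :=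
  { i : Fin d | (inner ℝ l (α i) : ℝ) < 0 }

/-- `H_λ = span{α i : ⟪λ, α i⟫ = 0}`. -/
def Hsub {E : Type*} [NormedAddCommGroup E] [InnerProductSpace ℝ E]
    {d : ℕ} (α : Fin d → E) (l : E) : Submodule ℝ E :=
  Submodule.span ℝ (α '' { i : Fin d | (inner ℝ l (α i) : ℝ) = 0 })

/-- `B_λ = {μ ∈ B : T_μ = T_λ}` where `B` is the open unit ball. -/
def Bpart {E : Type*} [NormedAddCommGroup E] [InnerProductSpace ℝ E]
    {d : ℕ} (α : Fin d → E) (l : E) : Set E :=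
  { μ ∈ Metric.ball (0 : E) 1 | Tneg α μ = Tneg α l }

section Aux

variable {E : Type*} [NormedAddCommGroup E] [InnerProductSpace ℝ E] {d : ℕ} {α : Fin d → E}

lemma exists_neg_multiple (hws : WeaklySymmetric α) {i : Fin d} (h : α i ≠ 0) :
    ∃ j : Fin d, ∃ t : ℝ, t < 0 ∧ α j = t • α i := by
  by_contra hcon
  push_neg at hcon
  set ℓ : Submodule ℝ E := Submodule.span ℝ {α i} with hℓ
  have hrank : finrank ℝ ℓ = 1 := finrank_span_singleton h
  have hgen : ∀ x ∈ (Set.range α ∩ (ℓ : Set E)), ∃ t : ℝ, 0 ≤ t ∧ x = t • α i := by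
    rintro x ⟨⟨j, rfl⟩, hx⟩
    obtain ⟨t, ht⟩ := Submodule.mem_span_singleton.1 hx
    refine ⟨t, ?_, ht.symm⟩
    by_contra hlt
    push_neg at hlt
    exact hcon j t hlt ht.symm
  have hcone : ∀ x ∈ Submodule.span {c : ℝ // 0 ≤ c} (Set.range α ∩ (ℓ : Set E)),
      ∃ t : ℝ, 0 ≤ t ∧ x = t • α i := by
    intro x hx
    induction hx using Submodule.span_induction with
    | mem x hxm => exact hgen x hxm
    | zero => exact ⟨0, le_refl _, by simp⟩
    | add x y _ _ hx hy =>
      obtain ⟨t, ht0, rfl⟩ := hx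
      obtain ⟨u, hu0, rfl⟩ := hy
      exact ⟨t + u, by linarith, by rw [add_smul]⟩
    | smul c x _ hx =>
      obtain ⟨t, ht0, rfl⟩ := hx
      exact ⟨(c : ℝ) * t, mul_nonneg c.2 ht0, by rw [mul_smul]; rfl⟩
  have hmem : α i ∈ Submodule.span {c : ℝ // 0 ≤ c} (Set.range α ∩ (ℓ : Set E)) :=
    Submodule.subset_span ⟨⟨i, rfl⟩, Submodule.mem_span_singleton_self _⟩
  rcases hws ℓ hrank with hz | hl
  · have : α i ∈ (({0} : Set E)) := hz ▸ hmem
    exact h (by simpa using this)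
  · have hneg : -α i ∈ Submodule.span {c : ℝ // 0 ≤ c} (Set.range α ∩ (ℓ : Set E)) := by
      have hmem2 : -α i ∈ (ℓ : Set E) := ℓ.neg_mem (Submodule.mem_span_singleton_self _)
      rw [← SetLike.mem_coe, hl]
      exact hmem2
    obtain ⟨t, ht0, ht⟩ := hcone _ hneg
    have h0 : (t + 1) • α i = 0 := by
      rw [add_smul, one_smul, ← ht]; abel
    rcases smul_eq_zero.1 h0 with h1 | h1
    · linarith
    · exact h h1

lemma nonneg_of_not_mem {μ l : E} (hT : Tneg α μ = Tneg α l) {i : Fin d}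
    (h : 0 ≤ (inner ℝ l (α i) : ℝ)) : 0 ≤ (inner ℝ μ (α i) : ℝ) := by
  by_contra hneg
  push_neg at hneg
  have : i ∈ Tneg α μ := hneg
  rw [hT] at this
  exact absurd h (not_le.2 this)

lemma key_zero (hws : WeaklySymmetric α) {μ l : E} (hT : Tneg α μ = Tneg α l) {i : Fin d}
    (h0 : (inner ℝ l (α i) : ℝ) = 0) : (inner ℝ μ (α i) : ℝ) = 0 := by
  rcases eq_or_ne (α i) 0 with hz | hz
  · rw [hz, inner_zero_right]
  obtain ⟨j, t, ht, hj⟩ := exists_neg_multiple hws hz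
  have hlj : (inner ℝ l (α j) : ℝ) = 0 := by rw [hj, real_inner_smul_right, h0, mul_zero]
  have h1 : 0 ≤ (inner ℝ μ (α i) : ℝ) := nonneg_of_not_mem hT h0.ge
  have h2 : 0 ≤ (inner ℝ μ (α j) : ℝ) := nonneg_of_not_mem hT hlj.ge
  rw [hj, real_inner_smul_right] at h2
  nlinarith

lemma key_pos (hws : WeaklySymmetric α) {μ l : E} (hT : Tneg α μ = Tneg α l) {i : Fin d}
    (hp : 0 < (inner ℝ l (α i) : ℝ)) : 0 < (inner ℝ μ (α i) : ℝ) := by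
  have hz : α i ≠ 0 := by
    intro hzz; rw [hzz, inner_zero_right] at hp; exact lt_irrefl _ hp
  obtain ⟨j, t, ht, hj⟩ := exists_neg_multiple hws hz
  have hlj : (inner ℝ l (α j) : ℝ) < 0 := by
    rw [hj, real_inner_smul_right]; exact mul_neg_of_neg_of_pos ht hp
  have hmj : (inner ℝ μ (α j) : ℝ) < 0 := by
    have : j ∈ Tneg α l := hlj
    rw [← hT] at this; exact this
  rw [hj, real_inner_smul_right] at hmj
  nlinarith

/-- Any `μ` with `T_μ = T_λ` is orthogonal to `H_λ`. -/
lemma mem_orthogonal_of_Tneg_eq (hws : WeaklySymmetric α) {μ l : E}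
    (hT : Tneg α μ = Tneg α l) : μ ∈ (Hsub α l)ᗮ := by
  rw [Submodule.mem_orthogonal]
  intro u hu
  induction hu using Submodule.span_induction with
  | mem x hxm =>
    obtain ⟨i, hi, rfl⟩ := hxm
    rw [real_inner_comm]
    exact key_zero hws hT hi
  | zero => exact inner_zero_left μ
  | add x y _ _ hx hy => rw [inner_add_left, hx, hy, add_zero]
  | smul c x _ hx => rw [real_inner_smul_left, hx, mul_zero]

end Aux

theorem stmt_9 {E : Type*} [NormedAddCommGroup E] [InnerProductSpace ℝ E]
    [FiniteDimensional ℝ E] {d : ℕ} (α : Fin d → E)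
    (hspan : Submodule.span ℝ (Set.range α) = ⊤)
    (hws : WeaklySymmetric α) (l : E) :
    Nonempty ((closure (Bpart α l) \ Bpart α l : Set E) ≃ₜ
      (Metric.sphere (0 : (Hsub α l)ᗮ) 1)) := by
  classical
  set F : Submodule ℝ E := (Hsub α l)ᗮ with hF
  have hlF : l ∈ F := mem_orthogonal_of_Tneg_eq hws rfl
  -- the open convex set U inside F
  set U : Set F :=
    Metric.ball 0 1 ∩ ⋂ i : Fin d,
      ({x : F | (inner ℝ l (α i) : ℝ) < 0 → (inner ℝ (x : E) (α i) : ℝ) < 0} ∩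
       {x : F | 0 < (inner ℝ l (α i) : ℝ) → 0 < (inner ℝ (x : E) (α i) : ℝ)}) with hUdef
  have hmemU : ∀ x : F, x ∈ U ↔ ‖x‖ < 1 ∧ ∀ i : Fin d,
      ((inner ℝ l (α i) : ℝ) < 0 → (inner ℝ (x : E) (α i) : ℝ) < 0) ∧
      (0 < (inner ℝ l (α i) : ℝ) → 0 < (inner ℝ (x : E) (α i) : ℝ)) := by
    intro x
    simp [hUdef, Set.mem_iInter, mem_ball_zero_iff, forall_and]
  -- orthogonality of elements of F to the α i with zero inner product against l
  have hFzero : ∀ (x : F) (i : Fin d), (inner ℝ l (α i) : ℝ) = 0 → (inner ℝ (x : E) (α i) : ℝ) = 0 := by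
    intro x i hi
    have hmem : α i ∈ Hsub α l := Submodule.subset_span ⟨i, hi, rfl⟩
    have := (Submodule.mem_orthogonal _ _).1 x.2 (α i) hmem
    rw [real_inner_comm]; exact this
  -- B_λ is the image of U
  have hBU : Bpart α l = Subtype.val '' U := by
    ext μ
    constructor
    · rintro ⟨hball, hT⟩
      have hFmem : μ ∈ F := mem_orthogonal_of_Tneg_eq hws hT
      refine ⟨⟨μ, hFmem⟩, ?_, rfl⟩
      rw [hmemU]
      refine ⟨by simpa [mem_ball_zero_iff] using hball, fun i => ⟨fun hi => ?_, fun hi => ?_⟩⟩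
      · have : i ∈ Tneg α l := hi
        rw [← hT] at this; exact this
      · exact key_pos hws hT hi
    · rintro ⟨x, hx, rfl⟩
      rw [hmemU] at hx
      obtain ⟨hn, hc⟩ := hx
      refine ⟨by simpa [mem_ball_zero_iff] using hn, ?_⟩
      ext i
      simp only [Tneg, Set.mem_setOf_eq]
      constructor
      · intro hneg
        rcases lt_trichotomy (inner ℝ l (α i) : ℝ) 0 with h | h | h
        · exact h
        · exact absurd (hFzero x i h) (ne_of_lt hneg)
        · exact absurd ((hc i).2 h) (not_lt.2 hneg.le)
      · intro hneg
        exact (hc i).1 hneg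
  -- U is open
  have hcont : ∀ i : Fin d, Continuous (fun x : F => (inner ℝ (x : E) (α i) : ℝ)) :=
    fun i => Continuous.inner (continuous_subtype_val) continuous_const
  have hUopen : IsOpen U := by
    refine Metric.isOpen_ball.inter (isOpen_iInter_of_finite fun i => IsOpen.inter ?_ ?_)
    · by_cases h : (inner ℝ l (α i) : ℝ) < 0
      · simp only [h, forall_true_left]
        exact isOpen_lt (hcont i) continuous_const
      · have he : {x : F | (inner ℝ l (α i) : ℝ) < 0 → (inner ℝ (x : E) (α i) : ℝ) < 0}
            = Set.univ := by ext x; simp [h]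
        rw [he]; exact isOpen_univ
    · by_cases h : 0 < (inner ℝ l (α i) : ℝ)
      · simp only [h, forall_true_left]
        exact isOpen_lt continuous_const (hcont i)
      · have he : {x : F | 0 < (inner ℝ l (α i) : ℝ) → 0 < (inner ℝ (x : E) (α i) : ℝ)}
            = Set.univ := by ext x; simp [h]
        rw [he]; exact isOpen_univ
  -- U is convex
  have hlin : ∀ i : Fin d, IsLinearMap ℝ (fun x : F => (inner ℝ (x : E) (α i) : ℝ)) := by
    intro i
    refine ⟨fun x y => ?_, fun c x => ?_⟩
    · rw [Submodule.coe_add, inner_add_left]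
    · rw [Submodule.coe_smul, real_inner_smul_left]; rw [smul_eq_mul]
  have hUconv : Convex ℝ U := by
    refine (convex_ball 0 1).inter (convex_iInter fun i => Convex.inter ?_ ?_)
    · by_cases h : (inner ℝ l (α i) : ℝ) < 0
      · have : {x : F | (inner ℝ l (α i) : ℝ) < 0 → (inner ℝ (x : E) (α i) : ℝ) < 0}
            = {x : F | (inner ℝ (x : E) (α i) : ℝ) < 0} := by ext x; simp [h]
        rw [this]
        exact convex_halfSpace_lt (hlin i) 0
      · have : {x : F | (inner ℝ l (α i) : ℝ) < 0 → (inner ℝ (x : E) (α i) : ℝ) < 0}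
            = Set.univ := by ext x; simp [h]
        rw [this]; exact convex_univ
    · by_cases h : 0 < (inner ℝ l (α i) : ℝ)
      · have : {x : F | 0 < (inner ℝ l (α i) : ℝ) → 0 < (inner ℝ (x : E) (α i) : ℝ)}
            = {x : F | 0 < (inner ℝ (x : E) (α i) : ℝ)} := by ext x; simp [h]
        rw [this]
        exact convex_halfSpace_gt (hlin i) 0
      · have : {x : F | 0 < (inner ℝ l (α i) : ℝ) → 0 < (inner ℝ (x : E) (α i) : ℝ)}
            = Set.univ := by ext x; simp [h]
        rw [this]; exact convex_univ
  -- U is nonempty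
  have hUne : U.Nonempty := by
    rcases eq_or_ne l 0 with rfl | hl0
    · refine ⟨0, (hmemU 0).2 ⟨by simp, fun i => ⟨fun hi => ?_, fun hi => ?_⟩⟩⟩
      · rw [inner_zero_left] at hi; exact absurd hi (lt_irrefl 0)
      · rw [inner_zero_left] at hi; exact absurd hi (lt_irrefl 0)
    · set r : ℝ := (2 * ‖l‖)⁻¹ with hr
      have hnl : 0 < ‖l‖ := norm_pos_iff.2 hl0
      have hrpos : 0 < r := by positivity
      refine ⟨r • ⟨l, hlF⟩, (hmemU _).2 ⟨?_, fun i => ⟨fun hi => ?_, fun hi => ?_⟩⟩⟩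
      · rw [norm_smul]
        have : ‖(⟨l, hlF⟩ : F)‖ = ‖l‖ := rfl
        rw [this, Real.norm_eq_abs, abs_of_pos hrpos, hr]
        rw [inv_mul_lt_iff₀ (by positivity)]
        linarith
      · have : ((r • (⟨l, hlF⟩ : F) : F) : E) = r • l := rfl
        rw [this, real_inner_smul_left]
        exact mul_neg_of_pos_of_neg hrpos hi
      · have : ((r • (⟨l, hlF⟩ : F) : F) : E) = r • l := rfl
        rw [this, real_inner_smul_left]
        exact mul_pos hrpos hi
  -- U is bounded
  have hUbdd : Bornology.IsBounded U :=
    Metric.isBounded_ball.subset Set.inter_subset_left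
  -- apply the convex-body theorem inside F
  obtain ⟨h, _, _, hfr⟩ :=
    exists_homeomorph_image_interior_closure_frontier_eq_unitBall hUconv
      (by rw [hUopen.interior_eq]; exact hUne) hUbdd
  -- the inclusion F → E is a closed embedding
  have hFclosed : IsClosed (F : Set E) := Submodule.closed_of_finiteDimensional F
  have hval : Topology.IsClosedEmbedding (Subtype.val : F → E) :=
    hFclosed.isClosedEmbedding_subtypeVal
  have hdiff : (closure (Bpart α l) \ Bpart α l : Set E) = Subtype.val '' frontier U := by
    rw [hBU, hval.closure_image_eq, ← Set.image_diff Subtype.val_injective,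
      hUopen.frontier_eq]
  -- homeomorphism between the image of the frontier and the frontier
  have hemb : Topology.IsEmbedding
      (fun x : (frontier U : Set F) => ((x : F) : E)) :=
    hval.isEmbedding.comp Topology.IsEmbedding.subtypeVal
  have hrange : Set.range (fun x : (frontier U : Set F) => ((x : F) : E))
      = Subtype.val '' frontier U := by
    ext y
    constructor
    · rintro ⟨x, rfl⟩; exact ⟨x, x.2, rfl⟩
    · rintro ⟨z, hz, rfl⟩; exact ⟨⟨z, hz⟩, rfl⟩
  have e1 : (frontier U : Set F) ≃ₜ (Subtype.val '' frontier U : Set E) :=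
    (Topology.IsEmbedding.toHomeomorph hemb).trans (Homeomorph.setCongr hrange)
  have e2 : (frontier U : Set F) ≃ₜ (Metric.sphere (0 : F) 1) :=
    (Homeomorph.image h (frontier U)).trans (Homeomorph.setCongr hfr)
  exact ⟨(Homeomorph.setCongr hdiff).trans (e1.symm.trans e2)⟩
end

section
/- Assume α_1, …, α_d span E and the family (α_i) is weakly symmetric. Then for every λ ∈ E one has span{α_i : i ∈ T_λ} + H_λ = E; that is, the images of the vectors α_i with i ∈ T_λ span the quotient space E/H_λ. -/
open Module

theorem stmt_11 {E : Type*} [NormedAddCommGroup E] [InnerProductSpace ℝ E]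
    [FiniteDimensional ℝ E] {d : ℕ} (α : Fin d → E)
    (hspan : Submodule.span ℝ (Set.range α) = ⊤)
    (hws : WeaklySymmetric α) (l : E) :
    Submodule.span ℝ (α '' Tneg α l) ⊔ Hsub α l = ⊤ := by
  rw [eq_top_iff, ← hspan, Submodule.span_le]
  rintro _ ⟨i, rfl⟩
  rcases lt_trichotomy (inner ℝ l (α i) : ℝ) 0 with h | h | h
  · exact Submodule.mem_sup_left (Submodule.subset_span ⟨i, h, rfl⟩)
  · exact Submodule.mem_sup_right (Submodule.subset_span ⟨i, h, rfl⟩)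
  · have hαi : α i ≠ 0 := by
      intro h0
      rw [h0, inner_zero_right] at h
      exact lt_irrefl 0 h
    set ℓ : Submodule ℝ E := Submodule.span ℝ {α i} with hℓ
    have hrank : finrank ℝ ℓ = 1 := finrank_span_singleton hαi
    have hmem : α i ∈ ((Submodule.span {c : ℝ // 0 ≤ c} (Set.range α ∩ ℓ) : PointedCone ℝ E) : Set E) :=
      Submodule.subset_span ⟨⟨i, rfl⟩, Submodule.mem_span_singleton_self _⟩
    rcases hws ℓ hrank with hc | hc
    · rw [hc] at hmem
      exact absurd hmem hαi
    · have hneg : -α i ∈ ((Submodule.span {c : ℝ // 0 ≤ c} (Set.range α ∩ ℓ) : PointedCone ℝ E) : Set E) := by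
        rw [hc]
        exact Submodule.neg_mem ℓ (Submodule.mem_span_singleton_self _)
      by_cases hex : ∃ j : Fin d, (inner ℝ l (α j) : ℝ) < 0 ∧ α j ∈ ℓ
      · obtain ⟨j, hj, hjl⟩ := hex
        obtain ⟨c, hc'⟩ := Submodule.mem_span_singleton.mp hjl
        have hcne : c ≠ 0 := by
          intro h0
          rw [h0, zero_smul] at hc'
          rw [← hc', inner_zero_right] at hj
          exact lt_irrefl 0 hj
        have heq : α i = c⁻¹ • α j := by
          rw [← hc', smul_smul, inv_mul_cancel₀ hcne, one_smul]
        rw [heq]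
        exact Submodule.mem_sup_left (Submodule.smul_mem _ _ (Submodule.subset_span ⟨j, hj, rfl⟩))
      · push_neg at hex
        exfalso
        have hge : ∀ x ∈ (Submodule.span {c : ℝ // 0 ≤ c} (Set.range α ∩ ℓ) : PointedCone ℝ E),
            0 ≤ (inner ℝ l x : ℝ) := by
          intro x hx
          induction hx using Submodule.span_induction with
          | mem x hx =>
            obtain ⟨⟨j, rfl⟩, hxl⟩ := hx
            by_contra hlt
            exact hex j (lt_of_not_ge hlt) hxl
          | zero => simp
          | add x y _ _ hx hy =>
            rw [inner_add_right]
            exact add_nonneg hx hy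
          | smul c x _ hx =>
            have hcs : c • x = (c : ℝ) • x := rfl
            rw [hcs, real_inner_smul_right]
            exact mul_nonneg c.2 hx
        have := hge _ hneg
        rw [inner_neg_right] at this
        linarith
end

section
/- Assume α_1, …, α_d span E, the family (α_i) is weakly symmetric, and the family is generic, meaning that for every λ ∈ E ∖ {0} there exist at least two indices i with ⟪λ, α_i⟫ > 0. Then for every λ ∈ E ∖ {0} one has |T_λ| + dim H_λ > s; equivalently, writing d_λ = d − |T_λ| and h⁰_λ = dim H_λ, one has d_λ − h⁰_λ < d − s. -/
open Module

-- weak symmetry gives: every nonzero α i has an opposite α j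
lemma ws_opp {E : Type*} [NormedAddCommGroup E] [InnerProductSpace ℝ E]
    {d : ℕ} {α : Fin d → E} (hws : WeaklySymmetric α) (i : Fin d) (hi : α i ≠ 0) :
    ∃ j : Fin d, ∃ c : ℝ, 0 < c ∧ α j = -(c • α i) := by
  by_contra hcon
  push_neg at hcon
  set ℓ : Submodule ℝ E := Submodule.span ℝ {α i} with hℓ
  have hrank : finrank ℝ ℓ = 1 := finrank_span_singleton hi
  have hmem : α i ∈ (Set.range α ∩ (ℓ : Set E)) :=
    ⟨⟨i, rfl⟩, Submodule.mem_span_singleton_self _⟩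
  have hray : ∀ x ∈ (Submodule.span {c : ℝ // 0 ≤ c} (Set.range α ∩ ℓ) : PointedCone ℝ E),
      ∃ t : ℝ, 0 ≤ t ∧ x = t • α i := by
    intro x hx
    induction hx using Submodule.span_induction with
    | mem x hx =>
      obtain ⟨⟨j, rfl⟩, hxl⟩ := hx
      obtain ⟨t, ht⟩ := Submodule.mem_span_singleton.mp hxl
      rcases le_or_gt 0 t with h0 | h0
      · exact ⟨t, h0, ht.symm⟩
      · exact absurd (by rw [← ht]; module) (hcon j (-t) (by linarith))
    | zero => exact ⟨0, le_refl _, by simp⟩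
    | add x y _ _ hx hy =>
      obtain ⟨t, ht0, rfl⟩ := hx
      obtain ⟨u, hu0, rfl⟩ := hy
      exact ⟨t + u, by linarith, by module⟩
    | smul c x _ hx =>
      obtain ⟨t, ht0, rfl⟩ := hx
      exact ⟨c.1 * t, mul_nonneg c.2 ht0, by rw [← Nonneg.coe_smul, smul_smul]⟩
  rcases hws ℓ hrank with h | h
  · have : α i ∈ (↑(Submodule.span {c : ℝ // 0 ≤ c} (Set.range α ∩ ℓ) : PointedCone ℝ E) : Set E) :=
      Submodule.subset_span hmem
    rw [h] at this
    exact hi this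
  · have hneg : -α i ∈ (↑(Submodule.span {c : ℝ // 0 ≤ c} (Set.range α ∩ ℓ) : PointedCone ℝ E) : Set E) := by
      rw [h]
      exact neg_mem (Submodule.mem_span_singleton_self _)
    obtain ⟨t, ht0, ht⟩ := hray _ hneg
    apply hi
    have : (t + 1) • α i = 0 := by
      rw [add_smul, one_smul, ← ht]; abel
    have htne : (t + 1) ≠ 0 := by linarith
    exact (smul_eq_zero.mp this).resolve_left htne

theorem stmt_12 {E : Type*} [NormedAddCommGroup E] [InnerProductSpace ℝ E]
    [FiniteDimensional ℝ E] {d : ℕ} (α : Fin d → E)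
    (hspan : Submodule.span ℝ (Set.range α) = ⊤)
    (hws : WeaklySymmetric α)
    (hgen : ∀ l : E, l ≠ 0 → ∃ i j : Fin d, i ≠ j ∧
      0 < (inner ℝ l (α i) : ℝ) ∧ 0 < (inner ℝ l (α j) : ℝ)) :
    ∀ l : E, l ≠ 0 →
      finrank ℝ E < (Tneg α l).ncard + finrank ℝ (Hsub α l) := by
  classical
  intro l hl
  by_contra hcon
  push_neg at hcon
  set T : Set (Fin d) := Tneg α l with hT
  set Z : Set (Fin d) := { i : Fin d | (inner ℝ l (α i) : ℝ) = 0 } with hZ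
  -- an element of T
  obtain ⟨i₀, j₀, hij₀, h1, h2⟩ := hgen (-l) (neg_ne_zero.mpr hl)
  have hi₀T : i₀ ∈ T := by
    have : (inner ℝ l (α i₀) : ℝ) < 0 := by
      rw [inner_neg_left] at h1; linarith
    exact this
  -- generic finrank-span bound
  have hspanle : ∀ A : Set (Fin d), finrank ℝ (Submodule.span ℝ (α '' A)) ≤ A.ncard := by
    intro A
    have hfin : (α '' A).Finite := Set.toFinite _
    haveI := hfin.fintype
    calc finrank ℝ (Submodule.span ℝ (α '' A)) ≤ (α '' A).toFinset.card :=
          finrank_span_le_card _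
      _ = (α '' A).ncard := (Set.ncard_eq_toFinset_card' _).symm
      _ ≤ A.ncard := Set.ncard_image_le (Set.toFinite _)
  -- the negative α's together with the zero α's span everything
  have htop : Submodule.span ℝ (α '' T) ⊔ Hsub α l = ⊤ := by
    rw [eq_top_iff, ← hspan, Submodule.span_le]
    rintro x ⟨i, rfl⟩
    rcases lt_trichotomy ((inner ℝ l (α i)) : ℝ) 0 with h | h | h
    · exact Submodule.mem_sup_left (Submodule.subset_span ⟨i, h, rfl⟩)
    · exact Submodule.mem_sup_right (Submodule.subset_span ⟨i, h, rfl⟩)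
    · have hne : α i ≠ 0 := by
        intro h0; rw [h0, inner_zero_right] at h; exact lt_irrefl _ h
      obtain ⟨j, c, hc, hj⟩ := ws_opp hws i hne
      have hjT : j ∈ T := by
        show (inner ℝ l (α j) : ℝ) < 0
        rw [hj, inner_neg_right, real_inner_smul_right]
        nlinarith
      have hrepr : α i = (-(1/c)) • α j := by
        rw [hj]; rw [smul_neg, smul_smul]; field_simp; simp
      rw [hrepr]
      exact Submodule.smul_mem _ _
        (Submodule.mem_sup_left (Submodule.subset_span ⟨j, hjT, rfl⟩))
  set W : Submodule ℝ E := Submodule.span ℝ (α '' ((T \ {i₀}) ∪ Z)) with hW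
  have hWsup : W = Submodule.span ℝ (α '' (T \ {i₀})) ⊔ Hsub α l := by
    rw [hW, Set.image_union, Submodule.span_union]; rfl
  -- α i₀ is not in W
  have hnotW : α i₀ ∉ W := by
    intro hmem
    have hWtop : W = ⊤ := by
      rw [eq_top_iff, ← htop, sup_le_iff]
      constructor
      · rw [Submodule.span_le]
        rintro x ⟨i, hiT, rfl⟩
        by_cases hii : i = i₀
        · subst hii; exact hmem
        · exact Submodule.subset_span ⟨i, Or.inl ⟨hiT, hii⟩, rfl⟩
      · rw [hWsup]; exact le_sup_right
    have hrank1 : finrank ℝ W ≤ (T \ {i₀}).ncard + finrank ℝ (Hsub α l) := by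
      rw [hWsup]
      have heq := Submodule.finrank_sup_add_finrank_inf_eq
        (Submodule.span ℝ (α '' (T \ {i₀}))) (Hsub α l)
      have h2 := hspanle (T \ {i₀})
      omega
    have hd : (T \ {i₀}).ncard = T.ncard - 1 := Set.ncard_diff_singleton_of_mem hi₀T
    have hc : 0 < T.ncard := (Set.ncard_pos (Set.toFinite _)).mpr ⟨i₀, hi₀T⟩
    have : finrank ℝ E = finrank ℝ W := by rw [hWtop, finrank_top]
    omega
  -- build the separating vector ν
  have hν0' : α i₀ - (Submodule.orthogonalProjection W (α i₀) : E) ≠ 0 := by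
    intro h
    exact hnotW (by rw [sub_eq_zero] at h; rw [h]; exact Submodule.coe_mem _)
  set ν : E := α i₀ - (Submodule.orthogonalProjection W (α i₀) : E) with hν
  have hν_orth : ν ∈ Wᗮ := Submodule.sub_starProjection_mem_orthogonal (K := W) (α i₀)
  have hνW : ∀ x ∈ W, (inner ℝ ν x : ℝ) = 0 := by
    intro x hx
    rw [real_inner_comm]
    exact hν_orth x hx
  have hpos : (0 : ℝ) < inner ℝ ν (α i₀) := by
    have hd : α i₀ = ν + (Submodule.orthogonalProjection W (α i₀) : E) := by rw [hν]; abel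
    rw [hd, inner_add_right, hνW _ (Submodule.coe_mem _), add_zero]
    have h0 : (inner ℝ ν ν : ℝ) ≠ 0 := fun h => hν0' (inner_self_eq_zero.mp h)
    exact lt_of_le_of_ne real_inner_self_nonneg (Ne.symm h0)
  have honly : ∀ i : Fin d, (0 : ℝ) < inner ℝ ν (α i) → i = i₀ := by
    intro i hipos
    by_contra hne
    rcases lt_trichotomy ((inner ℝ l (α i)) : ℝ) 0 with h | h | h
    · have : (inner ℝ ν (α i) : ℝ) = 0 :=
        hνW _ (Submodule.subset_span ⟨i, Or.inl ⟨h, hne⟩, rfl⟩)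
      linarith
    · have : (inner ℝ ν (α i) : ℝ) = 0 :=
        hνW _ (Submodule.subset_span ⟨i, Or.inr h, rfl⟩)
      linarith
    · have hne0 : α i ≠ 0 := by
        intro h0; rw [h0, inner_zero_right] at h; exact lt_irrefl _ h
      obtain ⟨k, c, hc, hk⟩ := ws_opp hws i hne0
      have hkT : k ∈ T := by
        show (inner ℝ l (α k) : ℝ) < 0
        rw [hk, inner_neg_right, real_inner_smul_right]
        nlinarith
      have hkν : (inner ℝ ν (α k) : ℝ) = -(c * inner ℝ ν (α i)) := by
        rw [hk, inner_neg_right, real_inner_smul_right]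
      by_cases hki : k = i₀
      · rw [hki] at hkν; nlinarith
      · have : (inner ℝ ν (α k) : ℝ) = 0 :=
          hνW _ (Submodule.subset_span ⟨k, Or.inl ⟨hkT, hki⟩, rfl⟩)
        nlinarith
  obtain ⟨i, j, hij, hpi, hpj⟩ := hgen ν hν0'
  exact hij ((honly i hpi).trans (honly j hpj).symm)
end

section
/- Let α_1, …, α_d ∈ ℤ^s be a weakly symmetric family, i.e. for every line ℓ ⊆ ℝ^s through the origin, the convex cone in ℝ^s generated by {α_i : α_i ∈ ℓ} equals {0} or ℓ. Then the additive submonoid of ℤ^s generated by α_1, …, α_d is a subgroup of ℤ^s; that is, the set of ℕ-linear combinations of the α_i is closed under negation. -/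
open Module

/-- A family of integer vectors `α i ∈ ℤ^s` is weakly symmetric if for every line
`ℓ ⊆ ℝ^s` through the origin (i.e. one-dimensional subspace), the convex cone generated
by the (real images of the) `α i` lying on `ℓ` equals `{0}` or all of `ℓ`. -/
def WeaklySymmetricZ {s d : ℕ} (α : Fin d → (Fin s → ℤ)) : Prop :=
  ∀ ℓ : Submodule ℝ (Fin s → ℝ), finrank ℝ ℓ = 1 →
    ((Submodule.span {c : ℝ // 0 ≤ c}
        (Set.range (fun i j => (α i j : ℝ)) ∩ ℓ) :
      PointedCone ℝ (Fin s → ℝ)) : Set (Fin s → ℝ)) = {0} ∨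
    ((Submodule.span {c : ℝ // 0 ≤ c}
        (Set.range (fun i j => (α i j : ℝ)) ∩ ℓ) :
      PointedCone ℝ (Fin s → ℝ)) : Set (Fin s → ℝ)) = (ℓ : Set (Fin s → ℝ))

theorem stmt_13 {s d : ℕ} (α : Fin d → (Fin s → ℤ))
    (hws : WeaklySymmetricZ α) :
    ∀ x ∈ AddSubmonoid.closure (Set.range α),
      -x ∈ AddSubmonoid.closure (Set.range α) := by
  have key : ∀ i : Fin d, -(α i) ∈ AddSubmonoid.closure (Set.range α) := by
    intro i
    by_cases h0 : α i = 0
    · rw [h0, neg_zero]; exact AddSubmonoid.zero_mem _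
    set β : Fin d → (Fin s → ℝ) := fun i j => (α i j : ℝ) with hβ
    have hβ0 : β i ≠ 0 := by
      intro h
      apply h0
      funext j
      have hj : (α i j : ℝ) = 0 := by simpa [hβ] using congrFun h j
      exact_mod_cast hj
    set ℓ : Submodule ℝ (Fin s → ℝ) := Submodule.span ℝ {β i} with hℓ
    have hrank : finrank ℝ ℓ = 1 := finrank_span_singleton hβ0
    have hws' := hws ℓ hrank
    rw [← hβ] at hws'
    have hmem : β i ∈ ((Submodule.span {c : ℝ // 0 ≤ c} (Set.range β ∩ ℓ) :
        PointedCone ℝ (Fin s → ℝ)) : Set (Fin s → ℝ)) :=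
      Submodule.subset_span ⟨⟨i, rfl⟩, Submodule.mem_span_singleton_self _⟩
    rcases hws' with hcone | hcone
    · exfalso
      rw [hcone] at hmem
      exact hβ0 hmem
    have hneg : -β i ∈ ((Submodule.span {c : ℝ // 0 ≤ c} (Set.range β ∩ ℓ) :
        PointedCone ℝ (Fin s → ℝ)) : Set (Fin s → ℝ)) := by
      rw [hcone]
      exact Submodule.neg_mem ℓ (Submodule.mem_span_singleton_self _)
    by_cases hex : ∃ j, ∃ t : ℝ, t < 0 ∧ β j = t • β i
    · -- there is a vector on the negative side of the line
      obtain ⟨j, t, ht, hj⟩ := hex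
      obtain ⟨m, hm⟩ : ∃ m, α i m ≠ 0 := by
        by_contra hc
        push_neg at hc
        exact h0 (funext hc)
      have hb : (α j m : ℝ) = t * (α i m : ℝ) := by
        have := congrFun hj m
        simpa [hβ] using this
      have hab : (α i m) • α j = (α j m) • α i := by
        funext n
        have hjn : (α j n : ℝ) = t * (α i n : ℝ) := by
          have := congrFun hj n
          simpa [hβ] using this
        have : ((α i m * α j n : ℤ) : ℝ) = ((α j m * α i n : ℤ) : ℝ) := by
          push_cast
          rw [hjn, hb]; ring
        have h' := Int.cast_injective (α := ℝ) this
        simpa [Pi.smul_apply, smul_eq_mul] using h'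
      -- produce positive integers e, f with e • α j + f • α i = 0
      obtain ⟨e, f, he, hf, heq⟩ :
          ∃ e f : ℤ, 0 < e ∧ 0 < f ∧ e • α j + f • α i = 0 := by
        have hane : (α i m : ℝ) ≠ 0 := Int.cast_ne_zero.mpr hm
        rcases hm.lt_or_gt with hlt | hlt
        · -- α i m < 0, so α j m > 0
          refine ⟨-(α i m), α j m, by omega, ?_, ?_⟩
          · have : (0 : ℝ) < (α j m : ℝ) := by
              rw [hb]
              have : (α i m : ℝ) < 0 := by exact_mod_cast hlt
              exact mul_pos_of_neg_of_neg ht this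
            exact_mod_cast this
          · rw [neg_smul, hab]; abel
        · -- α i m > 0, so α j m < 0
          refine ⟨α i m, -(α j m), hlt, ?_, ?_⟩
          · have : (α j m : ℝ) < 0 := by
              rw [hb]
              have : (0 : ℝ) < (α i m : ℝ) := by exact_mod_cast hlt
              exact mul_neg_of_neg_of_pos ht this
            have : α j m < 0 := by exact_mod_cast this
            omega
          · rw [hab, neg_smul]; abel
      have hfinal : -(α i) = (f - 1).toNat • α i + e.toNat • α j := by
        have h1 : ((f - 1).toNat : ℤ) = f - 1 := Int.toNat_of_nonneg (by omega)
        have h2 : ((e.toNat : ℤ)) = e := Int.toNat_of_nonneg he.le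
        have hcast : ((f - 1).toNat • α i + e.toNat • α j : Fin s → ℤ)
            = (f - 1) • α i + e • α j := by
          rw [← h1, ← h2, natCast_zsmul, natCast_zsmul, h1, h2]
        rw [hcast]
        have hE : e • α j = -(f • α i) := by
          rw [eq_neg_iff_add_eq_zero]; exact heq
        rw [hE, sub_smul, one_smul]
        abel
      rw [hfinal]
      exact AddSubmonoid.add_mem _
        (AddSubmonoid.nsmul_mem _ (AddSubmonoid.subset_closure (Set.mem_range_self i)) _)
        (AddSubmonoid.nsmul_mem _ (AddSubmonoid.subset_closure (Set.mem_range_self j)) _)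
    · -- otherwise all generators on ℓ are nonnegative multiples of β i: contradiction
      exfalso
      push_neg at hex
      have hsub : Set.range β ∩ ℓ ⊆
          ((Submodule.span {c : ℝ // 0 ≤ c} {β i} : PointedCone ℝ (Fin s → ℝ)) :
            Set (Fin s → ℝ)) := by
        rintro x ⟨⟨j, rfl⟩, hxℓ⟩
        rw [hℓ, SetLike.mem_coe, Submodule.mem_span_singleton] at hxℓ
        obtain ⟨t, ht⟩ := hxℓ
        have ht0 : 0 ≤ t := by
          by_contra hlt
          push_neg at hlt
          exact hex j t hlt ht.symm
        exact Submodule.mem_span_singleton.mpr ⟨⟨t, ht0⟩, ht⟩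
      have hle : (Submodule.span {c : ℝ // 0 ≤ c} (Set.range β ∩ ℓ) :
          PointedCone ℝ (Fin s → ℝ)) ≤
          (Submodule.span {c : ℝ // 0 ≤ c} {β i} : PointedCone ℝ (Fin s → ℝ)) :=
        Submodule.span_le.mpr hsub
      have hmem2 : -β i ∈ (Submodule.span {c : ℝ // 0 ≤ c} {β i} :
          PointedCone ℝ (Fin s → ℝ)) := hle hneg
      obtain ⟨⟨c, hc⟩, hceq⟩ := Submodule.mem_span_singleton.mp hmem2
      have hceq' : c • β i = -β i := hceq
      have hzero : (c + 1) • β i = 0 := by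
        rw [add_smul, one_smul, hceq']
        abel
      rcases smul_eq_zero.mp hzero with h | h
      · linarith
      · exact hβ0 h
  intro x hx
  induction hx using AddSubmonoid.closure_induction with
  | mem x hx =>
      obtain ⟨i, rfl⟩ := hx
      exact key i
  | zero => simpa using AddSubmonoid.zero_mem _
  | add x y hx hy ihx ihy =>
      rw [neg_add]
      exact AddSubmonoid.add_mem _ ihx ihy
end
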